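/- arXiv:2603.01738 — 10 statements merged into one kernel-verified Lean document; each statement's English description precedes it below -/
import Mathlib

section
/- Let q be an odd prime power. For all a0, a1, b0, b1, x1, x2, x3, x4, x5, x6 ∈ F, set a = ι(a0) + ε·ι(a1), b = ι(b0) + ε·ι(b1), x = ι(x1) + ε·ι(x2), y = ι(x3) + ε·ι(x4), z = ι(x5) + ε·ι(x6). Then z + a·(x² + y²) − b·(x^{q+1} + y^{q+1}) lies in the image ι(F) if and only if x6 + 2a0(x1x2 + x3x4) + a1(x1² + x3² + δ(x2² + x4²)) − b1(x1² − δx2² + x3² − δx4²) = 0 in F. -/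
/-!
Write elements of `E` as `ι c + ε ι d`. Since `ε ∉ ι(F)`, such an element lies in `ι(F)` exactly
when `d = 0`. The Frobenius `u ↦ u ^ q` fixes `ι(F)` and sends `ε` to `-ε`, so it is the conjugation
`ι s + ε ι t ↦ ι s - ε ι t`, and the norm `(ι s + ε ι t) ^ (q + 1)` equals `ι (s² - δ t²)`. Expanding
`z + a(x² + y²) - b(x^{q+1} + y^{q+1})` with `ε² = ι δ`, its `ε`-coordinate is the stated quadratic form.
-/

namespace RingHom

variable {F E : Type*} [Field F]

theorem add_mul_mem_range_iff [Ring E] (ι : F →+* E) {ε : E} (hε : ε ∉ Set.range ι) (c d : F) :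
    ι c + ε * ι d ∈ Set.range ι ↔ d = 0 := by
  refine ⟨fun ⟨e, he⟩ => ?_, fun hd => ⟨c, by simp [hd]⟩⟩
  by_contra hd
  refine hε ⟨(e - c) * d⁻¹, ?_⟩
  rw [map_mul, map_sub, he, add_sub_cancel_left, mul_assoc, ← map_mul, mul_inv_cancel₀ hd,
    map_one, mul_one]

variable [Fintype F] [CommRing E]

theorem add_mul_pow_card (ι : F →+* E) {ε : E} (hε : ε ^ Fintype.card F = -ε) (s t : F) :
    (ι s + ε * ι t) ^ Fintype.card F = ι s - ε * ι t := by
  let := ι.toAlgebra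
  have hfrob := map_add (FiniteField.frobeniusAlgHom F E) (algebraMap F E s) (ε * algebraMap F E t)
  rw [map_mul, AlgHom.commutes, AlgHom.commutes, FiniteField.frobeniusAlgHom_apply,
    FiniteField.frobeniusAlgHom_apply, hε, RingHom.algebraMap_toAlgebra] at hfrob
  rw [hfrob, neg_mul, sub_eq_add_neg]

theorem add_mul_pow_card_add_one (ι : F →+* E) {ε : E} (hε : ε ^ Fintype.card F = -ε) {δ : F}
    (hδ : ι δ = ε ^ 2) (s t : F) :
    (ι s + ε * ι t) ^ (Fintype.card F + 1) = ι (s ^ 2 - δ * t ^ 2) := by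
  rw [pow_succ, add_mul_pow_card ι hε, map_sub, map_mul, map_pow, map_pow, hδ]
  ring

end RingHom

theorem stmt_0_general (q : ℕ)
    (F E : Type) [Field F] [Fintype F] [Field E]
    (hF : Fintype.card F = q)
    (ι : F →+* E) (ε : E) (hε : ε ∉ Set.range ι) (hεq : ε ^ q = -ε)
    (δ : F) (hδ : ι δ = ε ^ 2)
    (a0 a1 b0 b1 x1 x2 x3 x4 x5 x6 : F) :
    ((ι x5 + ε * ι x6)
        + (ι a0 + ε * ι a1) * ((ι x1 + ε * ι x2) ^ 2 + (ι x3 + ε * ι x4) ^ 2)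
        - (ι b0 + ε * ι b1) *
            ((ι x1 + ε * ι x2) ^ (q + 1) + (ι x3 + ε * ι x4) ^ (q + 1))
      ∈ Set.range ι)
    ↔ x6 + 2 * a0 * (x1 * x2 + x3 * x4)
        + a1 * (x1 ^ 2 + x3 ^ 2 + δ * (x2 ^ 2 + x4 ^ 2))
        - b1 * (x1 ^ 2 - δ * x2 ^ 2 + x3 ^ 2 - δ * x4 ^ 2) = 0 := by
  subst hF
  rw [ι.add_mul_pow_card_add_one hεq hδ, ι.add_mul_pow_card_add_one hεq hδ,
    ← ι.add_mul_mem_range_iff hε (x5 + a0 * (x1 ^ 2 + x3 ^ 2 + δ * (x2 ^ 2 + x4 ^ 2))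
      + δ * a1 * (2 * (x1 * x2 + x3 * x4))
      - b0 * (x1 ^ 2 - δ * x2 ^ 2 + x3 ^ 2 - δ * x4 ^ 2))]
  congr! 1
  simp only [map_add, map_sub, map_mul, map_pow, map_ofNat, hδ]
  ring

/-- Barlotti–Cofman representation of the affine part of the BM variety `B_{a,b}`
in `PG(3,q²)`, `q` odd: membership of `z + a(x²+y²) − b(x^{q+1}+y^{q+1})` in `F_q`
is equivalent to the quadratic equation over `F_q`. -/
theorem stmt_0 (q : ℕ) (hq : Odd q)
    (F E : Type) [Field F] [Fintype F] [Field E] [Fintype E]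
    (hF : Fintype.card F = q) (hE : Fintype.card E = q ^ 2)
    (ι : F →+* E) (ε : E) (hε : ε ∉ Set.range ι) (hεq : ε ^ q = -ε)
    (δ : F) (hδ : ι δ = ε ^ 2)
    (a0 a1 b0 b1 x1 x2 x3 x4 x5 x6 : F) :
    ((ι x5 + ε * ι x6)
        + (ι a0 + ε * ι a1) * ((ι x1 + ε * ι x2) ^ 2 + (ι x3 + ε * ι x4) ^ 2)
        - (ι b0 + ε * ι b1) *
            ((ι x1 + ε * ι x2) ^ (q + 1) + (ι x3 + ε * ι x4) ^ (q + 1))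
      ∈ Set.range ι)
    ↔ x6 + 2 * a0 * (x1 * x2 + x3 * x4)
        + a1 * (x1 ^ 2 + x3 ^ 2 + δ * (x2 ^ 2 + x4 ^ 2))
        - b1 * (x1 ^ 2 - δ * x2 ^ 2 + x3 ^ 2 - δ * x4 ^ 2) = 0 :=
  stmt_0_general q F E hF ι ε hε hεq δ hδ a0 a1 b0 b1 x1 x2 x3 x4 x5 x6
end

section
/- Let F be a finite field of odd order q, let δ ∈ F be a nonsquare (i.e. t² ≠ δ for all t ∈ F), and let a0, a1, b1 ∈ F with δa1² − δb1² − a0² ≠ 0. Then the set {(x0, x1, x2, x3, x4, x6) ∈ F⁶ : x0x6 + 2a0(x1x2 + x3x4) + a1(x1² + x3² + δ(x2² + x4²)) − b1(x1² − δx2² + x3² − δx4²) = 0} has exactly q⁵ + q³ − q² elements. -/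
/-!
Write `Q(x, y) = (a₁ - b₁)x² + 2a₀xy + δ(a₁ + b₁)y²`, so that the quadric is
`x₀x₆ + Q(x₁, x₂) + Q(x₃, x₄) = 0`.
Counting zeros of `f(u) + g(w)` is a convolution of the fibre sizes of `f` and `g`, and when `g`
takes every nonzero value equally often only the zero fibres matter. The product `xy` takes each
nonzero value `q - 1` times, and the nondegenerate binary form `Q` takes each nonzero value
`q - ε` times, where `ε = ±1` is the quadratic character of minus its discriminant: after
diagonalising, this is the Jacobi sum `J(χ, χ) = -χ(-1)`. Hence `Q ⊥ Q` has `q³ + q² - q`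
zeros whatever `ε` is, and adding the hyperbolic plane `x₀x₆` gives `q⁵ + q³ - q²`.
-/

open Finset

def fiberCard {α R : Type*} [Fintype α] [DecidableEq R] (f : α → R) (c : R) : ℕ :=
  #{x | f x = c}

namespace fiberCard

variable {α β R : Type*} [Fintype α] [Fintype β] [DecidableEq R]

theorem comp_equiv (f : α → R) (e : β ≃ α) (c : R) : fiberCard (f ∘ e) c = fiberCard f c :=
  card_equiv e (by simp)

theorem sum_eq_card [Fintype R] (f : α → R) : ∑ c, fiberCard f c = Fintype.card α :=
  (card_eq_sum_card_fiberwise fun _ _ => mem_coe.2 (mem_univ _)).symm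

theorem add_eq_sum [AddCommGroup R] [Fintype R] (f : α → R) (g : β → R) (c : R) :
    fiberCard (fun p : α × β => f p.1 + g p.2) c
      = ∑ a, fiberCard f a * fiberCard g (c - a) := by
  rw [fiberCard, card_eq_sum_card_fiberwise (f := fun p : α × β => f p.1)
    fun _ _ => mem_coe.2 (mem_univ _)]
  refine sum_congr rfl fun a _ => ?_
  rw [fiberCard, fiberCard, ← card_product, ← univ_product_univ, ← filter_product,
    filter_filter]
  congr 1
  ext p
  simp only [mem_filter, mem_product, mem_univ, true_and]
  constructor
  · rintro ⟨h1, rfl⟩; exact ⟨rfl, by rw [← h1]; abel⟩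
  · rintro ⟨rfl, h2⟩; exact ⟨by rw [h2]; abel, rfl⟩

theorem sum_erase_zero [AddGroup R] [Fintype R] (f : α → R) :
    ∑ c ∈ univ.erase 0, (fiberCard f c : ℤ) = Fintype.card α - fiberCard f 0 := by
  rw [eq_sub_iff_add_eq', add_sum_erase univ (fun c => (fiberCard f c : ℤ)) (mem_univ 0)]
  exact_mod_cast sum_eq_card f

variable [AddCommGroup R] [Fintype R] {l : ℤ}

theorem zero_eq_of_const (g : β → R) (hg : ∀ c ≠ 0, (fiberCard g c : ℤ) = l) :
    (fiberCard g 0 : ℤ) = Fintype.card β - (Fintype.card R - 1) * l := by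
  have hsum := sum_erase_zero g
  rw [sum_congr rfl fun c hc => hg c (ne_of_mem_erase hc), sum_const, card_erase_of_mem
    (mem_univ 0), card_univ, nsmul_eq_mul, Nat.cast_sub Fintype.card_pos, Nat.cast_one] at hsum
  linarith

theorem add_zero_eq_of_const (f : α → R) (g : β → R)
    (hg : ∀ c ≠ 0, (fiberCard g c : ℤ) = l) :
    (fiberCard (fun p : α × β => f p.1 + g p.2) 0 : ℤ)
      = fiberCard f 0 * fiberCard g 0 + l * (Fintype.card α - fiberCard f 0) := by
  rw [add_eq_sum, ← add_sum_erase _ _ (mem_univ 0), ← sum_erase_zero f, mul_sum]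
  push_cast
  rw [sub_zero]
  congr 1
  refine sum_congr rfl fun a ha => ?_
  rw [zero_sub, hg _ (neg_ne_zero.2 (ne_of_mem_erase ha)), mul_comm]

theorem add_self_zero {Q : R × R → R} {e : ℤ} (he : e ^ 2 = 1)
    (hQ : ∀ c ≠ 0, (fiberCard Q c : ℤ) = Fintype.card R - e) :
    (fiberCard (fun w : (R × R) × (R × R) => Q w.1 + Q w.2) 0 : ℤ)
      = Fintype.card R ^ 3 + Fintype.card R ^ 2 - Fintype.card R := by
  rw [add_zero_eq_of_const Q Q hQ, zero_eq_of_const Q hQ, Fintype.card_prod]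
  push_cast
  linear_combination ((Fintype.card R : ℤ) - 1) * Fintype.card R * he

end fiberCard

section FiniteField

variable {F : Type*} [Field F] [Fintype F] [DecidableEq F]

theorem fiberCard_fst_mul_snd {c : F} (hc : c ≠ 0) :
    (fiberCard (fun p : F × F => p.1 * p.2) c : ℤ) = Fintype.card F - 1 := by
  have hbij : fiberCard (fun p : F × F => p.1 * p.2) c = #{x : F | x ≠ 0} := by
    refine card_nbij' Prod.fst (fun x => (x, c / x)) (fun p hp => ?_) (fun x hx => ?_)
      (fun p hp => ?_) (fun x _ => rfl)
    · simp only [coe_filter, mem_univ, true_and, Set.mem_ofPred_eq] at hp ⊢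
      rintro h0
      exact hc (by rw [← hp, h0, zero_mul])
    · simp only [coe_filter, mem_univ, true_and, Set.mem_ofPred_eq] at hx ⊢
      field_simp
    · simp only [coe_filter, mem_univ, true_and, Set.mem_ofPred_eq] at hp
      ext
      · rfl
      · rw [← hp]; field_simp [left_ne_zero_of_mul (hp ▸ hc)]
  rw [hbij, filter_ne', card_erase_of_mem (mem_univ 0), card_univ,
    Nat.cast_sub Fintype.card_pos, Nat.cast_one]

theorem fiberCard_add_fst_mul_snd_zero {α : Type*} [Fintype α] (f : α → F) :
    (fiberCard (fun p : α × (F × F) => f p.1 + p.2.1 * p.2.2) 0 : ℤ)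
      = Fintype.card F * fiberCard f 0 + (Fintype.card F - 1) * Fintype.card α := by
  have hH : ∀ c ≠ 0, (fiberCard (fun p : F × F => p.1 * p.2) c : ℤ) = Fintype.card F - 1 :=
    fun _ => fiberCard_fst_mul_snd
  rw [fiberCard.add_zero_eq_of_const f _ hH, fiberCard.zero_eq_of_const _ hH, Fintype.card_prod]
  push_cast
  ring

theorem fiberCard_const_mul_sq (hF : ringChar F ≠ 2) {a : F} (ha : a ≠ 0) (c : F) :
    (fiberCard (fun x : F => a * x ^ 2) c : ℤ) = quadraticChar F (a * c) + 1 := by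
  have hsqrt : fiberCard (fun x : F => a * x ^ 2) c = #{x : F | x ^ 2 = c / a}.toFinset := by
    rw [fiberCard, Set.toFinset_ofPred]
    congr 1
    ext x
    simp only [mem_filter, mem_univ, true_and]
    rw [eq_div_iff ha, mul_comm]
  rw [hsqrt, quadraticChar_card_sqrts hF,
    show c / a = a * c * a⁻¹ ^ 2 by field_simp, map_mul, quadraticChar_sq_one' (inv_ne_zero ha),
    mul_one]

theorem sum_quadraticChar_mul_quadraticChar_sub (hF : ringChar F ≠ 2) {c : F} (hc : c ≠ 0) :
    ∑ x, quadraticChar F x * quadraticChar F (c - x) = -quadraticChar F (-1) := by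
  have hJ := jacobiSum_nontrivial_inv (quadraticChar_ne_one hF)
  rw [(quadraticChar_isQuadratic F).inv, jacobiSum] at hJ
  rw [← hJ, ← Equiv.sum_comp (Equiv.mulLeft₀ c hc)]
  refine sum_congr rfl fun x _ => ?_
  rw [Equiv.mulLeft₀_apply, show c - c * x = c * (1 - x) by ring, map_mul, map_mul]
  linear_combination (quadraticChar F x * quadraticChar F (1 - x)) * quadraticChar_sq_one hc

theorem fiberCard_diagonal (hF : ringChar F ≠ 2) {a b c : F} (ha : a ≠ 0) (hb : b ≠ 0)
    (hc : c ≠ 0) :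
    (fiberCard (fun p : F × F => a * p.1 ^ 2 + b * p.2 ^ 2) c : ℤ)
      = Fintype.card F - quadraticChar F (-(a * b)) := by
  have hsum : ∑ x, quadraticChar F x = 0 := quadraticChar_sum_zero hF
  have hsum_sub : ∑ x, quadraticChar F (c - x) = 0 :=
    (Fintype.sum_equiv (Equiv.subLeft c) _ _ fun _ => rfl).trans hsum
  have hexpand : ∀ x, (quadraticChar F (a * x) + 1) * (quadraticChar F (b * (c - x)) + 1)
      = quadraticChar F (a * b) * (quadraticChar F x * quadraticChar F (c - x))
        + quadraticChar F a * quadraticChar F x + quadraticChar F b * quadraticChar F (c - x)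
        + 1 := fun x => by
    simp only [map_mul]; ring
  rw [fiberCard.add_eq_sum (fun x => a * x ^ 2) (fun y => b * y ^ 2)]
  push_cast
  simp only [fiberCard_const_mul_sq hF ha, fiberCard_const_mul_sq hF hb, hexpand, sum_add_distrib,
    ← mul_sum, hsum, hsum_sub, sum_quadraticChar_mul_quadraticChar_sub hF hc, sum_const,
    card_univ, nsmul_eq_mul]
  rw [neg_eq_neg_one_mul (a * b)]
  simp only [map_mul]
  ring

theorem fiberCard_binaryForm (hF : ringChar F ≠ 2) {a b d c : F} (hdisc : a * d - b ^ 2 ≠ 0)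
    (hc : c ≠ 0) :
    (fiberCard (fun p : F × F => a * p.1 ^ 2 + 2 * b * p.1 * p.2 + d * p.2 ^ 2) c : ℤ)
      = Fintype.card F - quadraticChar F (b ^ 2 - a * d) := by
  have h2 : (2 : F) ≠ 0 := Ring.two_ne_zero hF
  by_cases ha : a = 0
  · subst ha
    have hb : b ≠ 0 := by rintro rfl; simp at hdisc
    let e : F × F ≃ F × F :=
      { toFun := fun p => ((p.2 - d * p.1) / (2 * b), p.1)
        invFun := fun p => (p.2, 2 * b * p.1 + d * p.2)
        left_inv := fun p => by ext <;> simp [field]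
        right_inv := fun p => Prod.ext (by field_simp; ring) rfl }
    have hmul : (fun p : F × F => 0 * p.1 ^ 2 + 2 * b * p.1 * p.2 + d * p.2 ^ 2) ∘ e
        = fun p => p.1 * p.2 := by
      ext p; simp only [Function.comp_apply, e, Equiv.coe_fn_mk]; field_simp; ring
    rw [← fiberCard.comp_equiv _ e, hmul, fiberCard_fst_mul_snd hc, zero_mul, sub_zero,
      quadraticChar_sq_one' hb]
  · set γ := d - b ^ 2 / a
    have hγ : a * γ = a * d - b ^ 2 := by simp only [γ]; field_simp
    let e : F × F ≃ F × F :=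
      { toFun := fun p => (p.1 - b / a * p.2, p.2)
        invFun := fun p => (p.1 + b / a * p.2, p.2)
        left_inv := fun p => by ext <;> simp
        right_inv := fun p => by ext <;> simp }
    have hdiag : (fun p : F × F => a * p.1 ^ 2 + 2 * b * p.1 * p.2 + d * p.2 ^ 2) ∘ e
        = fun p => a * p.1 ^ 2 + γ * p.2 ^ 2 := by
      ext p; simp only [Function.comp_apply, e, Equiv.coe_fn_mk, γ]; field_simp; ring
    rw [← fiberCard.comp_equiv _ e, hdiag,
      fiberCard_diagonal hF ha (right_ne_zero_of_mul (hγ ▸ hdisc)) hc, hγ, neg_sub]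

end FiniteField

theorem stmt_3_general (F : Type) [Field F] [Fintype F] (hq : Odd (Fintype.card F))
    (δ : F)
    (a0 a1 b1 : F) (h : δ * a1 ^ 2 - δ * b1 ^ 2 - a0 ^ 2 ≠ 0) :
    Nat.card {v : Fin 6 → F |
        v 0 * v 5 + 2 * a0 * (v 1 * v 2 + v 3 * v 4)
          + a1 * ((v 1) ^ 2 + (v 3) ^ 2 + δ * ((v 2) ^ 2 + (v 4) ^ 2))
          - b1 * ((v 1) ^ 2 - δ * (v 2) ^ 2 + (v 3) ^ 2 - δ * (v 4) ^ 2) = 0}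
      = Fintype.card F ^ 5 + Fintype.card F ^ 3 - Fintype.card F ^ 2 := by
  classical
  have hF : ringChar F ≠ 2 := fun h2 =>
    Nat.not_even_iff_odd.2 hq (Nat.even_iff.2 (FiniteField.even_card_of_char_two h2))
  set q := Fintype.card F
  set Q : F × F → F := fun p =>
    (a1 - b1) * p.1 ^ 2 + 2 * a0 * p.1 * p.2 + δ * (a1 + b1) * p.2 ^ 2
  set disc := a0 ^ 2 - (a1 - b1) * (δ * (a1 + b1))
  have hdisc : disc ≠ 0 := fun h0 => h (by linear_combination -h0)
  have hQ : ∀ c ≠ 0, (fiberCard Q c : ℤ) = q - quadraticChar F disc := fun _ =>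
    fiberCard_binaryForm hF (fun h0 => hdisc (by linear_combination -h0))
  let coords : (Fin 6 → F) ≃ ((F × F) × (F × F)) × (F × F) :=
    { toFun := fun v => (((v 1, v 2), (v 3, v 4)), (v 0, v 5))
      invFun := fun t => ![t.2.1, t.1.1.1, t.1.1.2, t.1.2.1, t.1.2.2, t.2.2]
      left_inv := fun v => by funext i; fin_cases i <;> rfl
      right_inv := fun t => rfl }
  calc Nat.card _
      = fiberCard (fun t : ((F × F) × (F × F)) × (F × F) =>
          (Q t.1.1 + Q t.1.2) + t.2.1 * t.2.2) 0 := by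
        rw [← fiberCard.comp_equiv _ coords, fiberCard, ← Fintype.card_subtype,
          ← Nat.card_eq_fintype_card]
        refine Nat.card_congr (Equiv.subtypeEquivRight fun v => ?_)
        simp only [Set.mem_ofPred_eq, Function.comp_apply, coords, Q]
        constructor <;> intro hv <;> linear_combination hv
    _ = q ^ 5 + q ^ 3 - q ^ 2 := by
        zify [show q ^ 2 ≤ q ^ 5 + q ^ 3 from
          le_add_left (Nat.pow_le_pow_right Fintype.card_pos (by norm_num))]
        rw [fiberCard_add_fst_mul_snd_zero (fun w : (F × F) × (F × F) => Q w.1 + Q w.2),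
          fiberCard.add_self_zero (quadraticChar_sq_one hdisc) hQ, Fintype.card_prod,
          Fintype.card_prod]
        push_cast
        ring

/-- The base quadric of the BC cone `B'` of a BM variety (`q` odd) has
`q⁵ + q³ − q²` vector solutions, i.e. it is a hyperbolic quadric `Q⁺(5,q)`.
The coordinates are `(x0, x1, x2, x3, x4, x6) = (v 0, v 1, v 2, v 3, v 4, v 5)`. -/
theorem stmt_3 (F : Type) [Field F] [Fintype F] (hq : Odd (Fintype.card F))
    (δ : F) (hδ : ∀ t : F, t ^ 2 ≠ δ)
    (a0 a1 b1 : F) (h : δ * a1 ^ 2 - δ * b1 ^ 2 - a0 ^ 2 ≠ 0) :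
    Nat.card {v : Fin 6 → F |
        v 0 * v 5 + 2 * a0 * (v 1 * v 2 + v 3 * v 4)
          + a1 * ((v 1) ^ 2 + (v 3) ^ 2 + δ * ((v 2) ^ 2 + (v 4) ^ 2))
          - b1 * ((v 1) ^ 2 - δ * (v 2) ^ 2 + (v 3) ^ 2 - δ * (v 4) ^ 2) = 0}
      = Fintype.card F ^ 5 + Fintype.card F ^ 3 - Fintype.card F ^ 2 :=
  stmt_3_general F hq δ a0 a1 b1 h
end

section
/- Let F be a finite field of odd order q, let δ ∈ F be a nonsquare (i.e. t² ≠ δ for all t ∈ F), and let a0, a1, b1 ∈ F with (a0,a1) ≠ (0,0), b1 ≠ 0 and δa1² − δb1² − a0² ≠ 0. Then the set of pairs (μ0, μ1) ∈ F² satisfying the system: (a1−b1)(1+μ0²) + δ(a1+b1)μ1² + 2a0μ0μ1 = 0, δ²(a1−b1)μ1² + δ(a1+b1)(1+μ0²) + 2δa0μ0μ1 = 0, and 2δa1μ0μ1 + a0(δμ1² + μ0² + 1) = 0, is exactly {(μ0, 0) : μ0² = −1}. In particular this set has 2 elements if q ≡ 1 (mod 4) and is empty if q ≡ 3 (mod 4).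 -/
/-!
Subtracting `δ` times the first equation from the second leaves `2δb₁(1 + μ₀² - δμ₁²) = 0`, so
every solution lies on the conic `μ₀² - δμ₁² = -1`. Reducing the other two equations modulo this
conic gives `μ₁(δa₁μ₁ + a₀μ₀) = 0` and `μ₁(a₁μ₀ + a₀μ₁) = 0`. If `μ₁ ≠ 0`, this linear system in
`(μ₀, μ₁)` forces its determinant `δa₁² - a₀²` to vanish, impossible for a nonsquare `δ` unless
`a₀ = a₁ = 0`. Hence `μ₁ = 0` and `μ₀² = -1`, and `-1` is a square in `𝔽_q` exactly when
`q ≢ 3 (mod 4)`.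
-/

variable {F : Type*} [Field F]

theorem two_ne_zero_of_odd_card [Fintype F] (hq : Odd (Fintype.card F)) : (2 : F) ≠ 0 :=
  Ring.two_ne_zero fun hF => by
    have := FiniteField.even_card_of_char_two hF
    rw [Nat.odd_iff] at hq
    omega

theorem eq_zero_of_mul_sq_eq_sq {δ a b : F} (hδ : ∀ t : F, t ^ 2 ≠ δ) (h : δ * a ^ 2 = b ^ 2) :
    a = 0 ∧ b = 0 := by
  by_cases ha : a = 0
  · subst ha
    exact ⟨rfl, pow_eq_zero_iff two_ne_zero |>.mp (by simpa using h.symm)⟩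
  · exact absurd (by field_simp; linear_combination -h) (hδ (b / a))

theorem sq_eq_neg_one_iff {i x : F} (hi : i ^ 2 = -1) : x ^ 2 = -1 ↔ x = i ∨ x = -i := by
  rw [← hi, sq_eq_sq_iff_eq_or_eq_neg]

/-- The conditions for the spread line `r(0, 1, μ₀ + εμ₁, t)` to lie on the cone `B'` of the
BM variety `B_{a,b}`, as equations in `p = (μ₀, μ₁)`. -/
def spreadLineConeSystem (δ a0 a1 b1 : F) : Set (F × F) :=
  {p | (a1 - b1) * (1 + p.1 ^ 2) + δ * (a1 + b1) * p.2 ^ 2 + 2 * a0 * p.1 * p.2 = 0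
    ∧ δ ^ 2 * (a1 - b1) * p.2 ^ 2 + δ * (a1 + b1) * (1 + p.1 ^ 2) + 2 * δ * a0 * p.1 * p.2 = 0
    ∧ 2 * δ * a1 * p.1 * p.2 + a0 * (δ * p.2 ^ 2 + p.1 ^ 2 + 1) = 0}

section spreadLineConeSystem

variable {δ a0 a1 b1 : F} {p : F × F}

theorem conic_of_mem_spreadLineConeSystem (h2 : (2 : F) ≠ 0) (hδ0 : δ ≠ 0) (hb : b1 ≠ 0)
    (hp : p ∈ spreadLineConeSystem δ a0 a1 b1) : 1 + p.1 ^ 2 - δ * p.2 ^ 2 = 0 := by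
  obtain ⟨e1, e2, -⟩ := hp
  refine mul_left_cancel₀ (mul_ne_zero (mul_ne_zero h2 hδ0) hb) ?_
  linear_combination e2 - δ * e1

theorem snd_eq_zero_of_mem_spreadLineConeSystem (h2 : (2 : F) ≠ 0) (hδ : ∀ t : F, t ^ 2 ≠ δ)
    (ha : (a0, a1) ≠ (0, 0)) (hb : b1 ≠ 0) (hp : p ∈ spreadLineConeSystem δ a0 a1 b1) :
    p.2 = 0 := by
  obtain ⟨x, y⟩ := p
  have hδ0 : δ ≠ 0 := fun h0 => hδ 0 (by simp [h0])
  have hC := conic_of_mem_spreadLineConeSystem h2 hδ0 hb hp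
  obtain ⟨e1, e2, e3⟩ := hp
  by_contra hy
  have l1 : δ * a1 * y + a0 * x = 0 :=
    mul_left_cancel₀ (mul_ne_zero (mul_ne_zero (mul_ne_zero h2 h2) hδ0) hy) <| by
      linear_combination e2 + δ * e1 - 2 * δ * a1 * hC
  have l2 : a1 * x + a0 * y = 0 :=
    mul_left_cancel₀ (mul_ne_zero (mul_ne_zero h2 hδ0) hy) <| by
      linear_combination e3 - a0 * hC
  have hdet : δ * a1 ^ 2 = a0 ^ 2 :=
    mul_right_cancel₀ hy <| by linear_combination a1 * l1 - a0 * l2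
  obtain ⟨rfl, rfl⟩ := eq_zero_of_mul_sq_eq_sq hδ hdet
  exact ha rfl

theorem spreadLineConeSystem_eq (h2 : (2 : F) ≠ 0) (hδ : ∀ t : F, t ^ 2 ≠ δ)
    (ha : (a0, a1) ≠ (0, 0)) (hb : b1 ≠ 0) :
    spreadLineConeSystem δ a0 a1 b1 = {p : F × F | p.2 = 0 ∧ p.1 ^ 2 = -1} := by
  ext p
  constructor
  · intro hp
    have hy := snd_eq_zero_of_mem_spreadLineConeSystem h2 hδ ha hb hp
    have hC := conic_of_mem_spreadLineConeSystem h2 (fun h0 => hδ 0 (by simp [h0])) hb hp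
    exact ⟨hy, by rw [hy] at hC; linear_combination hC⟩
  · rintro ⟨hy, hx⟩
    obtain ⟨x, y⟩ := p
    simp only at hy hx
    subst hy
    exact ⟨by linear_combination (a1 - b1) * hx, by linear_combination δ * (a1 + b1) * hx,
      by linear_combination a0 * hx⟩

end spreadLineConeSystem

theorem ncard_setOf_snd_eq_zero_and_sq_eq_neg_one (h2 : (2 : F) ≠ 0) {i : F}
    (hi : i ^ 2 = -1) : {p : F × F | p.2 = 0 ∧ p.1 ^ 2 = -1}.ncard = 2 := by
  have hpair : {p : F × F | p.2 = 0 ∧ p.1 ^ 2 = -1} = {(i, 0), (-i, 0)} := by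
    ext ⟨x, y⟩
    simp only [Set.mem_ofPred_eq, Set.mem_insert_iff, Set.mem_singleton_iff, Prod.mk.injEq,
      sq_eq_neg_one_iff hi]
    tauto
  rw [hpair, Set.ncard_pair]
  intro hc
  have h2i : 2 * i = 0 := by linear_combination congrArg Prod.fst hc
  have hi0 : i = 0 := (mul_eq_zero.mp h2i).resolve_left h2
  simp [hi0] at hi

theorem setOf_snd_eq_zero_and_sq_eq_neg_one_eq_empty (h : ¬IsSquare (-1 : F)) :
    {p : F × F | p.2 = 0 ∧ p.1 ^ 2 = -1} = ∅ :=
  Set.eq_empty_of_forall_notMem fun p ⟨_, hx⟩ => h ⟨p.1, by rw [← hx, sq]⟩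

theorem stmt_4_general (F : Type) [Field F] [Fintype F] (hq : Odd (Fintype.card F))
    (δ : F) (hδ : ∀ t : F, t ^ 2 ≠ δ)
    (a0 a1 b1 : F) (ha : (a0, a1) ≠ (0, 0)) (hb : b1 ≠ 0) :
    ({p : F × F |
        (a1 - b1) * (1 + p.1 ^ 2) + δ * (a1 + b1) * p.2 ^ 2 + 2 * a0 * p.1 * p.2 = 0
        ∧ δ ^ 2 * (a1 - b1) * p.2 ^ 2 + δ * (a1 + b1) * (1 + p.1 ^ 2)
            + 2 * δ * a0 * p.1 * p.2 = 0
        ∧ 2 * δ * a1 * p.1 * p.2 + a0 * (δ * p.2 ^ 2 + p.1 ^ 2 + 1) = 0}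
      = {p : F × F | p.2 = 0 ∧ p.1 ^ 2 = -1})
    ∧ (Fintype.card F % 4 = 1 →
        Nat.card {p : F × F |
          (a1 - b1) * (1 + p.1 ^ 2) + δ * (a1 + b1) * p.2 ^ 2 + 2 * a0 * p.1 * p.2 = 0
          ∧ δ ^ 2 * (a1 - b1) * p.2 ^ 2 + δ * (a1 + b1) * (1 + p.1 ^ 2)
              + 2 * δ * a0 * p.1 * p.2 = 0
          ∧ 2 * δ * a1 * p.1 * p.2 + a0 * (δ * p.2 ^ 2 + p.1 ^ 2 + 1) = 0} = 2)
    ∧ (Fintype.card F % 4 = 3 →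
        {p : F × F |
          (a1 - b1) * (1 + p.1 ^ 2) + δ * (a1 + b1) * p.2 ^ 2 + 2 * a0 * p.1 * p.2 = 0
          ∧ δ ^ 2 * (a1 - b1) * p.2 ^ 2 + δ * (a1 + b1) * (1 + p.1 ^ 2)
              + 2 * δ * a0 * p.1 * p.2 = 0
          ∧ 2 * δ * a1 * p.1 * p.2 + a0 * (δ * p.2 ^ 2 + p.1 ^ 2 + 1) = 0} = ∅) := by
  have h2 := two_ne_zero_of_odd_card hq
  have hS := spreadLineConeSystem_eq h2 hδ ha hb
  refine ⟨hS, fun hq1 => ?_, fun hq3 => ?_⟩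
  · obtain ⟨i, hi⟩ := FiniteField.isSquare_neg_one_iff.mpr (by omega : Fintype.card F % 4 ≠ 3)
    change Nat.card (spreadLineConeSystem δ a0 a1 b1) = 2
    rw [hS, Nat.card_coe_set_eq]
    exact ncard_setOf_snd_eq_zero_and_sq_eq_neg_one h2 (by rw [sq, hi])
  · change spreadLineConeSystem δ a0 a1 b1 = ∅
    rw [hS]
    exact setOf_snd_eq_zero_and_sq_eq_neg_one_eq_empty
      fun h => FiniteField.isSquare_neg_one_iff.mp h (by omega)

/-- The system expressing that the spread line `r(0,1,μ0+εμ1,t)` is contained in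
the BC cone `B'` of a BM variety, `q` odd: its solution set is
`{(μ0, 0) : μ0² = −1}`, which has 2 elements if `q ≡ 1 (mod 4)` and is empty if
`q ≡ 3 (mod 4)`. -/
theorem stmt_4 (F : Type) [Field F] [Fintype F] (hq : Odd (Fintype.card F))
    (δ : F) (hδ : ∀ t : F, t ^ 2 ≠ δ)
    (a0 a1 b1 : F) (ha : (a0, a1) ≠ (0, 0)) (hb : b1 ≠ 0)
    (h : δ * a1 ^ 2 - δ * b1 ^ 2 - a0 ^ 2 ≠ 0) :
    ({p : F × F |
        (a1 - b1) * (1 + p.1 ^ 2) + δ * (a1 + b1) * p.2 ^ 2 + 2 * a0 * p.1 * p.2 = 0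
        ∧ δ ^ 2 * (a1 - b1) * p.2 ^ 2 + δ * (a1 + b1) * (1 + p.1 ^ 2)
            + 2 * δ * a0 * p.1 * p.2 = 0
        ∧ 2 * δ * a1 * p.1 * p.2 + a0 * (δ * p.2 ^ 2 + p.1 ^ 2 + 1) = 0}
      = {p : F × F | p.2 = 0 ∧ p.1 ^ 2 = -1})
    ∧ (Fintype.card F % 4 = 1 →
        Nat.card {p : F × F |
          (a1 - b1) * (1 + p.1 ^ 2) + δ * (a1 + b1) * p.2 ^ 2 + 2 * a0 * p.1 * p.2 = 0
          ∧ δ ^ 2 * (a1 - b1) * p.2 ^ 2 + δ * (a1 + b1) * (1 + p.1 ^ 2)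
              + 2 * δ * a0 * p.1 * p.2 = 0
          ∧ 2 * δ * a1 * p.1 * p.2 + a0 * (δ * p.2 ^ 2 + p.1 ^ 2 + 1) = 0} = 2)
    ∧ (Fintype.card F % 4 = 3 →
        {p : F × F |
          (a1 - b1) * (1 + p.1 ^ 2) + δ * (a1 + b1) * p.2 ^ 2 + 2 * a0 * p.1 * p.2 = 0
          ∧ δ ^ 2 * (a1 - b1) * p.2 ^ 2 + δ * (a1 + b1) * (1 + p.1 ^ 2)
              + 2 * δ * a0 * p.1 * p.2 = 0
          ∧ 2 * δ * a1 * p.1 * p.2 + a0 * (δ * p.2 ^ 2 + p.1 ^ 2 + 1) = 0} = ∅) :=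
  stmt_4_general F hq δ hδ a0 a1 b1 ha hb
end

section
/- Let q be an odd prime power. For all x1, x2, x3, x4 ∈ F with (x1, x2) ≠ (0, 0) and x1² − δx2² + x3² − δx4² = 0, there exists a unique α ∈ E such that α^{q+1} = −1 and ι(x3) + ε·ι(x4) = α·(ι(x1) + ε·ι(x2)). -/
/-!
Write `u = ι x1 + ε ι x2` and `v = ι x3 + ε ι x4`. Since `x ↦ x ^ q` is a field automorphism of `E`
fixing `ι F` and sending `ε` to `-ε`, it acts on `ι F + ε ι F` as conjugation, so
`u ^ (q + 1) = ι (x1² - δ x2²)` and likewise for `v`. As `ε ∉ ι F`, the point `u` is nonzero, and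
the quadric equation says `v ^ (q + 1) = -u ^ (q + 1)`; hence `α = v / u` is the one and only
solution.
-/

open FiniteField

section Conjugation

variable {F E : Type*} [Field F] [Fintype F] [Field E] (ι : F →+* E)

theorem pow_card_add_mul_map {ε : E} (hε : ε ^ Fintype.card F = -ε) (a b : F) :
    (ι a + ε * ι b) ^ Fintype.card F = ι a - ε * ι b := by
  let := ι.toAlgebra
  have hfrob : ∀ x : E, x ^ Fintype.card F = frobeniusAlgHom F E x := fun _ => rfl
  rw [hfrob, map_add, map_mul, ← hfrob ε, hε, ← RingHom.algebraMap_toAlgebra ι,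
    AlgHom.commutes, AlgHom.commutes]
  ring

theorem pow_card_succ_add_mul_map {ε : E} (hε : ε ^ Fintype.card F = -ε) {δ : F}
    (hδ : ι δ = ε ^ 2) (a b : F) :
    (ι a + ε * ι b) ^ (Fintype.card F + 1) = ι (a ^ 2 - δ * b ^ 2) := by
  rw [pow_succ, pow_card_add_mul_map ι hε, map_sub, map_mul, hδ]
  simp only [map_pow]
  ring

end Conjugation

theorem map_add_mul_map_ne_zero {F E : Type*} [Field F] [Field E] (ι : F →+* E) {ε : E}
    (hε : ε ∉ Set.range ι) {a b : F} (hab : (a, b) ≠ (0, 0)) : ι a + ε * ι b ≠ 0 := by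
  intro h0
  rcases eq_or_ne b 0 with rfl | hb
  · exact hab (by simpa using h0)
  · refine hε ⟨-a / b, ?_⟩
    rw [map_div₀, map_neg, div_eq_iff (by simpa using hb)]
    linear_combination -h0

theorem stmt_6_general (q : ℕ)
    (F E : Type) [Field F] [Fintype F] [Field E]
    (hF : Fintype.card F = q)
    (ι : F →+* E) (ε : E) (hε : ε ∉ Set.range ι) (hεq : ε ^ q = -ε)
    (δ : F) (hδ : ι δ = ε ^ 2)
    (x1 x2 x3 x4 : F) (hx : (x1, x2) ≠ (0, 0))
    (h : x1 ^ 2 - δ * x2 ^ 2 + x3 ^ 2 - δ * x4 ^ 2 = 0) :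
    ∃! α : E, α ^ (q + 1) = -1 ∧ ι x3 + ε * ι x4 = α * (ι x1 + ε * ι x2) := by
  subst hF
  set u := ι x1 + ε * ι x2
  have hu : u ≠ 0 := map_add_mul_map_ne_zero ι hε hx
  have hvu : (ι x3 + ε * ι x4) ^ (Fintype.card F + 1) = -u ^ (Fintype.card F + 1) := by
    rw [pow_card_succ_add_mul_map ι hεq hδ, pow_card_succ_add_mul_map ι hεq hδ, ← map_neg]
    congr 1
    linear_combination h
  refine ⟨(ι x3 + ε * ι x4) / u, ⟨?_, (div_mul_cancel₀ _ hu).symm⟩, ?_⟩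
  · rw [div_pow, hvu, neg_div, div_self (pow_ne_zero _ hu)]
  · rintro β ⟨-, hβ⟩
    rw [eq_div_iff hu, ← hβ]

/-- Uniqueness part of the partition proposition: every point of
`{x1² − δx2² + x3² − δx4² = 0}` with `(x1,x2) ≠ (0,0)` lies on exactly one
spread line `r(0,1,α,t)` with `α^{q+1} = −1`. -/
theorem stmt_6 (q : ℕ) (hq : Odd q)
    (F E : Type) [Field F] [Fintype F] [Field E] [Fintype E]
    (hF : Fintype.card F = q) (hE : Fintype.card E = q ^ 2)
    (ι : F →+* E) (ε : E) (hε : ε ∉ Set.range ι) (hεq : ε ^ q = -ε)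
    (δ : F) (hδ : ι δ = ε ^ 2)
    (x1 x2 x3 x4 : F) (hx : (x1, x2) ≠ (0, 0))
    (h : x1 ^ 2 - δ * x2 ^ 2 + x3 ^ 2 - δ * x4 ^ 2 = 0) :
    ∃! α : E, α ^ (q + 1) = -1 ∧ ι x3 + ε * ι x4 = α * (ι x1 + ε * ι x2) :=
  stmt_6_general q F E hF ι ε hε hεq δ hδ x1 x2 x3 x4 hx h
end

section
/- Let q = 2^e with e ≥ 2. For all a0, a1, b0, b1, x1, x2, x3, x4, x5, x6 ∈ F, set a = ι(a0) + ε·ι(a1), b = ι(b0) + ε·ι(b1), x = ι(x1) + ε·ι(x2), y = ι(x3) + ε·ι(x4), z = ι(x5) + ε·ι(x6). Then z + a·(x² + y²) + b·(x^{q+1} + y^{q+1}) lies in the image ι(F) if and only if x6 + a0(x2² + x4²) + a1(x1² + x2² + δx2² + x3² + x4² + δx4²) + b1(x1² + δx2² + x1x2 + x3² + δx4² + x3x4) = 0 in F. -/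
/-!
Writing elements of `E` as `ι s + ε ι t`, the relation `ε² + ε = ι δ` gives
`(ι s + ε ι t)² = ι (s² + δ t²) + ε ι (t²)` in characteristic 2. The `q`-th power Frobenius fixes
exactly `ι F` and maps `ε` to the other root `ε + 1` of `X² + X - ι δ`, so `x ^ (q + 1)` is the norm
`ι (s² + s t + δ t²) ∈ ι F`. Hence the whole expression is `ι A + ε ι B` with `B` the stated
polynomial, and it lies in `ι F` exactly when `B = 0`.
-/

open Polynomial

theorem mem_range_of_pow_card_eq_self {F E : Type*} [Field F] [Fintype F] [Field E]
    (ι : F →+* E) {x : E} (hx : x ^ Fintype.card F = x) : x ∈ Set.range ι := by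
  have hsplits : (X ^ Fintype.card F - X : F[X]).Splits := by
    rw [splits_iff_card_roots, FiniteField.roots_X_pow_card_sub_X, ← Finset.card_def,
      Finset.card_univ, FiniteField.X_pow_card_sub_X_natDegree_eq F Fintype.one_lt_card]
  exact hsplits.mem_range_of_isRoot (FiniteField.X_pow_card_sub_X_ne_zero F Fintype.one_lt_card)
    (by simp [hx])

theorem CharTwo.eq_or_eq_add_one_of_sq_add_self_eq {R : Type*} [CommRing R] [IsDomain R]
    [CharP R 2] {u v : R} (h : u ^ 2 + u = v ^ 2 + v) : u = v ∨ u = v + 1 := by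
  have hfac : (u - v) * (u - (v + 1)) = 0 := by
    linear_combination h + (v ^ 2 - u * v - u + v) * CharTwo.two_eq_zero (R := R)
  rcases mul_eq_zero.mp hfac with h | h
  · exact .inl (sub_eq_zero.mp h)
  · exact .inr (sub_eq_zero.mp h)

theorem add_mul_mem_range_iff {F E : Type*} [Field F] [Field E] (ι : F →+* E) {ε : E}
    (hε : ε ∉ Set.range ι) (A B : F) : ι A + ε * ι B ∈ Set.range ι ↔ B = 0 := by
  constructor
  · rintro ⟨c, hc⟩
    by_contra hB
    refine hε ⟨(c - A) / B, ?_⟩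
    rw [map_div₀, map_sub, div_eq_iff (by simpa using hB)]
    linear_combination hc
  · rintro rfl
    exact ⟨A, by simp⟩

namespace BarlottiCofman

variable {F E : Type*} [Field F] [Field E] (ι : F →+* E) {δ : F} {ε : E} {e : ℕ}

theorem apply_pow_two_pow [Fintype F] (hF : Fintype.card F = 2 ^ e) (c : F) :
    ι c ^ 2 ^ e = ι c := by
  rw [← map_pow, ← hF, FiniteField.pow_card]

variable [CharP E 2]

theorem sq_add_eps_mul (hεδ : ε ^ 2 + ε = ι δ) (s t : F) :
    (ι s + ε * ι t) ^ 2 = ι (s ^ 2 + δ * t ^ 2) + ε * ι (t ^ 2) := by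
  simp only [map_add, map_mul, map_pow]
  linear_combination (ι t) ^ 2 * hεδ
    + (ε * ι s * ι t - ε * (ι t) ^ 2) * CharTwo.two_eq_zero (R := E)

variable [Fintype F]

theorem eps_pow_two_pow (hF : Fintype.card F = 2 ^ e) (hε : ε ∉ Set.range ι)
    (hεδ : ε ^ 2 + ε = ι δ) : ε ^ 2 ^ e = ε + 1 := by
  have hconj : (ε ^ 2 ^ e) ^ 2 + ε ^ 2 ^ e = ε ^ 2 + ε := by
    rw [← pow_mul, mul_comm, pow_mul, ← add_pow_expChar_pow, hεδ, apply_pow_two_pow ι hF]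
  refine (CharTwo.eq_or_eq_add_one_of_sq_add_self_eq hconj).resolve_left fun hfix ↦ hε ?_
  exact mem_range_of_pow_card_eq_self ι (hF ▸ hfix)

theorem add_eps_mul_pow_two_pow_succ (hF : Fintype.card F = 2 ^ e) (hε : ε ∉ Set.range ι)
    (hεδ : ε ^ 2 + ε = ι δ) (s t : F) :
    (ι s + ε * ι t) ^ (2 ^ e + 1) = ι (s ^ 2 + s * t + δ * t ^ 2) := by
  have hfrob : (ι s + ε * ι t) ^ 2 ^ e = ι s + (ε + 1) * ι t := by
    rw [add_pow_expChar_pow, mul_pow, eps_pow_two_pow ι hF hε hεδ, apply_pow_two_pow ι hF,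
      apply_pow_two_pow ι hF]
  rw [pow_succ, hfrob]
  simp only [map_add, map_mul, map_pow]
  linear_combination (ι t) ^ 2 * hεδ + ε * ι s * ι t * CharTwo.two_eq_zero (R := E)

end BarlottiCofman

theorem stmt_7_general (e : ℕ)
    (F E : Type) [Field F] [Fintype F] [Field E]
    (hF : Fintype.card F = 2 ^ e)
    (ι : F →+* E) (δ : F) (ε : E) (hε : ε ∉ Set.range ι)
    (hεδ : ε ^ 2 + ε = ι δ)
    (a0 a1 b0 b1 x1 x2 x3 x4 x5 x6 : F) :
    ((ι x5 + ε * ι x6)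
        + (ι a0 + ε * ι a1) * ((ι x1 + ε * ι x2) ^ 2 + (ι x3 + ε * ι x4) ^ 2)
        + (ι b0 + ε * ι b1) *
            ((ι x1 + ε * ι x2) ^ (2 ^ e + 1) + (ι x3 + ε * ι x4) ^ (2 ^ e + 1))
      ∈ Set.range ι)
    ↔ x6 + a0 * (x2 ^ 2 + x4 ^ 2)
        + a1 * (x1 ^ 2 + x2 ^ 2 + δ * x2 ^ 2 + x3 ^ 2 + x4 ^ 2 + δ * x4 ^ 2)
        + b1 * (x1 ^ 2 + δ * x2 ^ 2 + x1 * x2 + x3 ^ 2 + δ * x4 ^ 2 + x3 * x4)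
      = 0 := by
  have := charP_of_card_eq_prime_pow hF
  have := charP_of_injective_ringHom ι.injective 2
  open BarlottiCofman in
  rw [sq_add_eps_mul ι hεδ, sq_add_eps_mul ι hεδ, add_eps_mul_pow_two_pow_succ ι hF hε hεδ,
    add_eps_mul_pow_two_pow_succ ι hF hε hεδ,
    ← add_mul_mem_range_iff ι hε
      (x5 + a0 * (x1 ^ 2 + δ * x2 ^ 2 + x3 ^ 2 + δ * x4 ^ 2) + δ * a1 * (x2 ^ 2 + x4 ^ 2)
        + b0 * (x1 ^ 2 + x1 * x2 + δ * x2 ^ 2 + x3 ^ 2 + x3 * x4 + δ * x4 ^ 2))]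
  convert Iff.rfl using 2
  simp only [map_add, map_mul, map_pow]
  linear_combination ι a1 * (ι x2 ^ 2 + ι x4 ^ 2) *
    (hεδ + (ι δ - ε ^ 2) * CharTwo.two_eq_zero (R := E))

/-- Barlotti–Cofman representation of the affine part of the BM variety
`B_{a,b}` in `PG(3,q²)`, `q = 2^e` even. -/
theorem stmt_7 (e : ℕ) (he : 2 ≤ e)
    (F E : Type) [Field F] [Fintype F] [Field E] [Fintype E]
    (hF : Fintype.card F = 2 ^ e) (hE : Fintype.card E = (2 ^ e) ^ 2)
    (ι : F →+* E) (δ : F) (ε : E) (hε : ε ∉ Set.range ι)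
    (hεδ : ε ^ 2 + ε = ι δ)
    (a0 a1 b0 b1 x1 x2 x3 x4 x5 x6 : F) :
    ((ι x5 + ε * ι x6)
        + (ι a0 + ε * ι a1) * ((ι x1 + ε * ι x2) ^ 2 + (ι x3 + ε * ι x4) ^ 2)
        + (ι b0 + ε * ι b1) *
            ((ι x1 + ε * ι x2) ^ (2 ^ e + 1) + (ι x3 + ε * ι x4) ^ (2 ^ e + 1))
      ∈ Set.range ι)
    ↔ x6 + a0 * (x2 ^ 2 + x4 ^ 2)
        + a1 * (x1 ^ 2 + x2 ^ 2 + δ * x2 ^ 2 + x3 ^ 2 + x4 ^ 2 + δ * x4 ^ 2)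
        + b1 * (x1 ^ 2 + δ * x2 ^ 2 + x1 * x2 + x3 ^ 2 + δ * x4 ^ 2 + x3 * x4)
      = 0 :=
  stmt_7_general e F E hF ι δ ε hε hεδ a0 a1 b0 b1 x1 x2 x3 x4 x5 x6
end

section
/- Let F be a finite field of order q = 2^e with e ≥ 2, let δ ∈ F satisfy x² + x ≠ δ for all x ∈ F, and let a0, a1, b1 ∈ F with b1 ≠ 0. Then the set {(x0, x1, x2, x3, x4, x6) ∈ F⁶ : x0x6 + a0(x2² + x4²) + a1(x1² + x2² + δx2² + x3² + x4² + δx4²) + b1(x1² + δx2² + x1x2 + x3² + δx4² + x3x4) = 0} has exactly q⁵ + q³ − q² elements. -/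
/-!
In characteristic 2 the cross terms `2 xᵢxⱼ` of `(x₁ + x₃)²` and `(x₂ + x₄)²` vanish, so the
quadric can be written as `x₀x₆ + (x₁ + x₃)(α(x₁ + x₃) + b₁x₂) + (x₂ + x₄)(β(x₂ + x₄) + b₁x₃)`
with `α = a₁ + b₁` and `β = a₀ + a₁ + (a₁ + b₁)δ`.
Since `b₁ ≠ 0`, the six linear forms appearing here are independent, so the quadric is the
hyperbolic form `u ⬝ᵥ w` on `F³ × F³` in new coordinates. Its zeros are counted by fibres over `u`:
`u = 0` contributes `q³` vectors `w`, and each of the `q³ - 1` vectors `u ≠ 0` a hyperplane of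
`q²` vectors `w`.
-/

open Module Matrix

theorem two_eq_zero_of_card_eq_two_pow {F : Type*} [Field F] [Fintype F] {e : ℕ} (he : e ≠ 0)
    (hF : Fintype.card F = 2 ^ e) : (2 : F) = 0 := by
  have hchar : ringChar F = 2 := FiniteField.even_card_iff_char_two.mpr <| by
    rw [hF]
    exact Nat.two_pow_mod_two_eq_zero.mpr (Nat.pos_of_ne_zero he)
  exact_mod_cast hchar ▸ ringChar.Nat.cast_ringChar

section IsotropicPairs

variable {K V W : Type*} [Field K]
  [AddCommGroup V] [Module K V] [FiniteDimensional K V]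
  [AddCommGroup W] [Module K W] [FiniteDimensional K W]

theorem Module.Dual.natCard_ker_of_ne_zero {f : Dual K W} (hf : f ≠ 0) :
    Nat.card (LinearMap.ker f) = Nat.card K ^ (finrank K W - 1) := by
  rw [natCard_eq_pow_finrank (K := K), ← f.finrank_ker_add_one_of_ne_zero hf,
    Nat.add_sub_cancel]

theorem LinearMap.natCard_isotropicPairs [Finite K] {B : V →ₗ[K] W →ₗ[K] K}
    (hB : B.SeparatingLeft) :
    Nat.card {p : V × W // B p.1 p.2 = 0} =
      Nat.card K ^ finrank K W
        + (Nat.card K ^ finrank K V - 1) * Nat.card K ^ (finrank K W - 1) := by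
  classical
  have := Module.finite_of_finite K (M := V)
  have := Module.finite_of_finite K (M := W)
  have : Fintype V := Fintype.ofFinite V
  have hfiber (x : V) : Nat.card {y // B x y = 0} =
      if x = 0 then Nat.card K ^ finrank K W else Nat.card K ^ (finrank K W - 1) := by
    split_ifs with hx
    · subst hx
      simp [natCard_eq_pow_finrank (K := K) (V := W)]
    · exact Dual.natCard_ker_of_ne_zero fun h => hx (hB x fun y => by simp [h])
  rw [Nat.card_congr (Equiv.subtypeProdEquivSigmaSubtype fun x y => B x y = 0), Nat.card_sigma,
    ← Finset.add_sum_erase _ _ (Finset.mem_univ 0)]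
  simp only [hfiber, if_pos, Finset.sum_ite_of_false (fun x hx => Finset.ne_of_mem_erase hx)]
  rw [Finset.sum_const, Finset.card_erase_of_mem (Finset.mem_univ 0), Finset.card_univ,
    ← Nat.card_eq_fintype_card, natCard_eq_pow_finrank (K := K) (V := V), smul_eq_mul]

end IsotropicPairs

section HyperbolicCoords

variable {R : Type*} [CommRing R]

def hyperbolicCoords (α β γ : R) (v : Fin 6 → R) : (Fin 3 → R) × (Fin 3 → R) :=
  (![v 0, v 1 + v 3, v 2 + v 4], ![v 5, α * (v 1 + v 3) + γ * v 2, β * (v 2 + v 4) + γ * v 3])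

theorem hyperbolicCoords_injective [IsDomain R] (α β : R) {γ : R} (hγ : γ ≠ 0) :
    Function.Injective (hyperbolicCoords α β γ) := by
  intro v w h
  simp only [hyperbolicCoords, Prod.mk.injEq, vecCons_inj, and_true] at h
  obtain ⟨⟨h0, h13, h24⟩, h5, h2, h3⟩ := h
  have e2 : v 2 = w 2 := mul_left_cancel₀ hγ (by linear_combination h2 - α * h13)
  have e3 : v 3 = w 3 := mul_left_cancel₀ hγ (by linear_combination h3 - β * h24)
  have e1 : v 1 = w 1 := by linear_combination h13 - e3
  have e4 : v 4 = w 4 := by linear_combination h24 - e2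
  funext i
  fin_cases i <;> assumption

theorem hyperbolicCoords_bijective [IsDomain R] [Fintype R] (α β : R) {γ : R} (hγ : γ ≠ 0) :
    Function.Bijective (hyperbolicCoords α β γ) :=
  (Fintype.bijective_iff_injective_and_card _).mpr
    ⟨hyperbolicCoords_injective α β hγ, by simp [Fintype.card_prod, ← pow_add]⟩

theorem hyperbolicCoords_dotProduct (α β γ : R) (v : Fin 6 → R) :
    (hyperbolicCoords α β γ v).1 ⬝ᵥ (hyperbolicCoords α β γ v).2 =
      v 0 * v 5 + (v 1 + v 3) * (α * (v 1 + v 3) + γ * v 2)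
        + (v 2 + v 4) * (β * (v 2 + v 4) + γ * v 3) := by
  simp [hyperbolicCoords, dotProduct, Fin.sum_univ_three]

end HyperbolicCoords

-- `(x₀, x₁, x₂, x₃, x₄, x₆) = (v 0, v 1, v 2, v 3, v 4, v 5)`
theorem stmt_9_general (e : ℕ) (he : 2 ≤ e)
    (F : Type) [Field F] [Fintype F] (hF : Fintype.card F = 2 ^ e)
    (δ : F)
    (a0 a1 b1 : F) (hb : b1 ≠ 0) :
    Nat.card {v : Fin 6 → F |
        v 0 * v 5 + a0 * ((v 2) ^ 2 + (v 4) ^ 2)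
          + a1 * ((v 1) ^ 2 + (v 2) ^ 2 + δ * (v 2) ^ 2
              + (v 3) ^ 2 + (v 4) ^ 2 + δ * (v 4) ^ 2)
          + b1 * ((v 1) ^ 2 + δ * (v 2) ^ 2 + v 1 * v 2
              + (v 3) ^ 2 + δ * (v 4) ^ 2 + v 3 * v 4) = 0}
      = Fintype.card F ^ 5 + Fintype.card F ^ 3 - Fintype.card F ^ 2 := by
  have h2 : (2 : F) = 0 := two_eq_zero_of_card_eq_two_pow (by omega) hF
  have hsep : (dotProductBilin F F : (Fin 3 → F) →ₗ[F] _ →ₗ[F] F).SeparatingLeft :=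
    fun x hx => dotProduct_eq_zero_iff.mp hx
  have hq : Fintype.card F ^ 2 ≤ Fintype.card F ^ 5 :=
    Nat.pow_le_pow_right Fintype.card_pos (by norm_num)
  calc _ = Nat.card {p : (Fin 3 → F) × (Fin 3 → F) // p.1 ⬝ᵥ p.2 = 0} := by
        refine Nat.card_congr <| Equiv.subtypeEquiv
          (.ofBijective _ (hyperbolicCoords_bijective (a1 + b1) (a0 + a1 + a1 * δ + b1 * δ) hb))
          fun v => ?_
        rw [Set.mem_ofPred_eq, Equiv.ofBijective_apply, hyperbolicCoords_dotProduct]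
        refine Iff.of_eq (congrArg (· = (0 : F)) ?_)
        linear_combination -(v 1 * v 3 * (a1 + b1) + v 2 * v 3 * b1
          + v 2 * v 4 * (a0 + a1 + a1 * δ + b1 * δ)) * h2
    _ = Fintype.card F ^ 3 + (Fintype.card F ^ 3 - 1) * Fintype.card F ^ 2 := by
        simpa [Nat.card_eq_fintype_card] using (dotProductBilin F F).natCard_isotropicPairs hsep
    _ = _ := by
        rw [Nat.sub_mul, one_mul, ← pow_add]
        norm_num
        omega

/-- The base quadric of the BC cone `B'` of a BM variety (`q = 2^e` even) has
`q⁵ + q³ − q²` vector solutions, i.e. it is a hyperbolic quadric `Q⁺(5,q)`.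
The coordinates are `(x0, x1, x2, x3, x4, x6) = (v 0, v 1, v 2, v 3, v 4, v 5)`. -/
theorem stmt_9 (e : ℕ) (he : 2 ≤ e)
    (F : Type) [Field F] [Fintype F] (hF : Fintype.card F = 2 ^ e)
    (δ : F) (hδ : ∀ x : F, x ^ 2 + x ≠ δ)
    (a0 a1 b1 : F) (hb : b1 ≠ 0) :
    Nat.card {v : Fin 6 → F |
        v 0 * v 5 + a0 * ((v 2) ^ 2 + (v 4) ^ 2)
          + a1 * ((v 1) ^ 2 + (v 2) ^ 2 + δ * (v 2) ^ 2
              + (v 3) ^ 2 + (v 4) ^ 2 + δ * (v 4) ^ 2)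
          + b1 * ((v 1) ^ 2 + δ * (v 2) ^ 2 + v 1 * v 2
              + (v 3) ^ 2 + δ * (v 4) ^ 2 + v 3 * v 4) = 0}
      = Fintype.card F ^ 5 + Fintype.card F ^ 3 - Fintype.card F ^ 2 :=
  stmt_9_general e he F hF δ a0 a1 b1 hb
end

section
/- Let q = 2^e with e odd, e ≥ 3, and s = 2^{(e+1)/2}. Define Γ_ε : E → E by Γ_ε(u) = (u + (u^q + u)ε)^{s+2} + (u^q + u)^s + (u^{2q} + u²)ε + u^{q+1} + u². For all x1, x2, x3, x4, x5, x6 ∈ F, setting x = ι(x1) + ε·ι(x2), y = ι(x3) + ε·ι(x4), z = ι(x5) + ε·ι(x6), one has z^q + z = Γ_ε(x) + Γ_ε(y) in E if and only if x6 = x1^{s+2} + x1x2 + x2^s + x3^{s+2} + x3x4 + x4^s in F. -/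
/-!
In characteristic 2, `ε ^ q + ε` is a root of `T ^ 2 + T` (Frobenius fixes `ι δ`), and it is not `0`
because the fixed points of `u ↦ u ^ q` in `E` are exactly `ι F`; hence `ε ^ q = ε + 1`. So for
`u = ι a + ε * ι b` the trace `u ^ q + u` is `ι b` and `u + (u ^ q + u) * ε` is `ι a`, and
substituting these into `Γ_ε` collapses it to `ι (a ^ (s + 2) + a * b + b ^ s)`.
-/

open Polynomial

theorem FiniteField.X_pow_card_sub_X_eq_prod (K : Type*) [Field K] [Fintype K] :
    (X ^ Fintype.card K - X : K[X]) = ∏ c : K, (X - C c) := by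
  have hdeg := FiniteField.X_pow_card_sub_X_natDegree_eq K (Fintype.one_lt_card (α := K))
  have hmonic : (X ^ Fintype.card K - X : K[X]).Monic :=
    monic_X_pow_sub (by simpa using Fintype.one_lt_card (α := K))
  have hcard : Multiset.card (X ^ Fintype.card K - X : K[X]).roots
      = (X ^ Fintype.card K - X : K[X]).natDegree := by
    rw [FiniteField.roots_X_pow_card_sub_X, hdeg]; rfl
  conv_lhs => rw [← prod_multiset_X_sub_C_of_monic_of_roots_card_eq hmonic hcard,
    FiniteField.roots_X_pow_card_sub_X]
  rfl

section

variable {F E : Type*} [Field F] [Fintype F] [CommRing E] (ι : F →+* E)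

theorem RingHom.mem_range_of_pow_card_eq [IsDomain E] {x : E} (hx : x ^ Fintype.card F = x) :
    x ∈ Set.range ι := by
  have hprod : ∏ c : F, (x - ι c) = 0 := by
    simpa [Polynomial.map_prod, eval_prod, hx] using Eq.symm <|
      congrArg (eval x ∘ map ι) (FiniteField.X_pow_card_sub_X_eq_prod F)
  obtain ⟨c, -, hc⟩ := Finset.prod_eq_zero_iff.1 hprod
  exact ⟨c, (sub_eq_zero.1 hc).symm⟩

variable [CharP E 2] {e : ℕ} (hq : Fintype.card F = 2 ^ e)
include hq

theorem pow_card_eq_add_one_of_sq_add_self [IsDomain E] {ε : E} {δ : F} (hε : ε ∉ Set.range ι)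
    (hεδ : ε ^ 2 + ε = ι δ) : ε ^ Fintype.card F = ε + 1 := by
  set t := ε ^ Fintype.card F + ε
  have ht : t * (t + 1) = 0 := by
    have hfrob : (ε ^ 2 + ε) ^ Fintype.card F = ε ^ 2 + ε := by
      rw [hεδ, ← map_pow, FiniteField.pow_card]
    rw [hq, add_pow_char_pow, ← pow_mul, mul_comm, pow_mul, ← hq] at hfrob
    linear_combination hfrob + (ε * ε ^ Fintype.card F + ε ^ 2 + ε) * CharTwo.two_eq_zero (R := E)
  rcases mul_eq_zero.1 ht with h | h
  · have hfix : ε ^ Fintype.card F = ε := by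
      linear_combination h - ε * CharTwo.two_eq_zero (R := E)
    exact absurd (ι.mem_range_of_pow_card_eq hfix) hε
  · linear_combination h - (ε + 1) * CharTwo.two_eq_zero (R := E)

theorem pow_card_add_self_of_pow_card_eq_add_one {ε : E} (hε : ε ^ Fintype.card F = ε + 1)
    (a b : F) : (ι a + ε * ι b) ^ Fintype.card F + (ι a + ε * ι b) = ι b := by
  rw [hq, add_pow_char_pow, mul_pow, ← map_pow, ← map_pow, ← hq, FiniteField.pow_card,
    FiniteField.pow_card, hε]
  linear_combination (ι a + ε * ι b) * CharTwo.two_eq_zero (R := E)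

end

/-- The paper's `Γ_ε`, with `q` the size of the base field. -/
def btGamma {R : Type*} [CommRing R] (q s : ℕ) (ε u : R) : R :=
  (u + (u ^ q + u) * ε) ^ (s + 2) + (u ^ q + u) ^ s + (u ^ (2 * q) + u ^ 2) * ε
    + u ^ (q + 1) + u ^ 2

theorem btGamma_eq_of_pow_add_self {R : Type*} [CommRing R] [CharP R 2] {q : ℕ} (s : ℕ)
    {ε u α β : R} (hβ : u ^ q + u = β) (hα : u + β * ε = α) :
    btGamma q s ε u = α ^ (s + 2) + α * β + β ^ s := by
  have huq : u ^ q = u + β := by linear_combination hβ - u * CharTwo.two_eq_zero (R := R)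
  rw [btGamma, hβ, hα, mul_comm 2 q, pow_mul, pow_succ u q, huq]
  linear_combination β * hα + (u * β * ε + u ^ 2 * ε + u ^ 2) * CharTwo.two_eq_zero (R := R)

theorem stmt_12_general (e : ℕ)
    (q s : ℕ) (hq : q = 2 ^ e)
    (F E : Type) [Field F] [Fintype F] [Field E]
    (hF : Fintype.card F = q)
    (ι : F →+* E) (δ : F) (ε : E) (hε : ε ∉ Set.range ι)
    (hεδ : ε ^ 2 + ε = ι δ)
    (Γ : E → E)
    (hΓ : ∀ u : E, Γ u
      = (u + (u ^ q + u) * ε) ^ (s + 2) + (u ^ q + u) ^ s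
        + (u ^ (2 * q) + u ^ 2) * ε + u ^ (q + 1) + u ^ 2)
    (x1 x2 x3 x4 x5 x6 : F) :
    (ι x5 + ε * ι x6) ^ q + (ι x5 + ε * ι x6)
        = Γ (ι x1 + ε * ι x2) + Γ (ι x3 + ε * ι x4)
    ↔ x6 = x1 ^ (s + 2) + x1 * x2 + x2 ^ s
        + x3 ^ (s + 2) + x3 * x4 + x4 ^ s := by
  subst hF
  have : Fact (Nat.Prime 2) := ⟨Nat.prime_two⟩
  have : CharP F 2 := charP_of_card_eq_prime_pow hq
  have : CharP E 2 := charP_of_injective_ringHom ι.injective 2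
  have htrace := pow_card_add_self_of_pow_card_eq_add_one ι hq
    (pow_card_eq_add_one_of_sq_add_self ι hq hε hεδ)
  have hΓ_coord (a b : F) : Γ (ι a + ε * ι b) = ι (a ^ (s + 2) + a * b + b ^ s) := by
    rw [hΓ, ← btGamma, btGamma_eq_of_pow_add_self s (α := ι a) (htrace a b)
      (by linear_combination (ε * ι b) * CharTwo.two_eq_zero (R := E))]
    simp
  rw [htrace, hΓ_coord, hΓ_coord, ← map_add, ι.injective.eq_iff]
  simp only [add_assoc]

/-- Barlotti–Cofman representation of the affine part of the BT variety
`V³_ε : Z^q + Z = Γ_ε(X) + Γ_ε(Y)`, yielding the hypersurface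
`C³_ε : x6 = x1^{s+2} + x1x2 + x2^s + x3^{s+2} + x3x4 + x4^s`. -/
theorem stmt_12 (e : ℕ) (he : Odd e) (he3 : 3 ≤ e)
    (q s : ℕ) (hq : q = 2 ^ e) (hs : s = 2 ^ ((e + 1) / 2))
    (F E : Type) [Field F] [Fintype F] [Field E] [Fintype E]
    (hF : Fintype.card F = q) (hE : Fintype.card E = q ^ 2)
    (ι : F →+* E) (δ : F) (ε : E) (hε : ε ∉ Set.range ι)
    (hεδ : ε ^ 2 + ε = ι δ)
    (Γ : E → E)
    (hΓ : ∀ u : E, Γ u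
      = (u + (u ^ q + u) * ε) ^ (s + 2) + (u ^ q + u) ^ s
        + (u ^ (2 * q) + u ^ 2) * ε + u ^ (q + 1) + u ^ 2)
    (x1 x2 x3 x4 x5 x6 : F) :
    (ι x5 + ε * ι x6) ^ q + (ι x5 + ε * ι x6)
        = Γ (ι x1 + ε * ι x2) + Γ (ι x3 + ε * ι x4)
    ↔ x6 = x1 ^ (s + 2) + x1 * x2 + x2 ^ s
        + x3 ^ (s + 2) + x3 * x4 + x4 ^ s :=
  stmt_12_general e q s hq F E hF ι δ ε hε hεδ Γ hΓ x1 x2 x3 x4 x5 x6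
end

section
/- Let e be an odd positive integer and let F be a finite field with 2^e elements. Then the map F → F sending x to x^{2^{(e+1)/2} + 2} is bijective. -/
/-!
In a group with zero, `x ↦ x ^ n` (with `n ≠ 0`) is bijective as soon as `n` is coprime to
the order of the unit group, here `2 ^ e - 1`. Writing `e = 2k + 1`, the exponent is
`2 (2 ^ k + 1)`; the factor `2` is harmless since `2 ^ e - 1` is odd, and
`2 ^ e - 1 = 2 (2 ^ k - 1)(2 ^ k + 1) + 1` leaves remainder `1` modulo `2 ^ k + 1`.
-/

theorem Nat.coprime_two_pow_succ_add_two_two_pow_odd_sub_one (k : ℕ) :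
    Nat.Coprime (2 ^ (k + 1) + 2) (2 ^ (2 * k + 1) - 1) := by
  obtain ⟨a, ha⟩ : ∃ a, 2 ^ k = a + 1 := ⟨2 ^ k - 1, (Nat.sub_add_cancel Nat.one_le_two_pow).symm⟩
  have hfactor : 2 ^ (k + 1) + 2 = 2 * (2 ^ k + 1) := by ring
  have hrem : 2 ^ (2 * k + 1) - 1 = 2 * a * (2 ^ k + 1) + 1 := by
    rw [pow_succ, pow_mul', ha]
    ring_nf
    omega
  rw [hfactor]
  refine Nat.Coprime.mul_left ?_ ?_
  · rw [Nat.coprime_two_left, hrem]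
    exact ((even_two_mul a).mul_right _).add_one
  · rw [hrem, Nat.coprime_mul_right_add_right]
    exact Nat.coprime_one_right _

theorem pow_bijective_of_coprime_card_units {G₀ : Type*} [GroupWithZero G₀] {n : ℕ}
    (hn0 : n ≠ 0) (hn : (Nat.card G₀ˣ).Coprime n) :
    Function.Bijective (fun x : G₀ => x ^ n) := by
  have hunits := hn.pow_left_bijective
  constructor
  · intro x y hxy
    simp only at hxy
    rcases eq_or_ne x 0 with rfl | hx
    · rw [zero_pow hn0, eq_comm, pow_eq_zero_iff hn0] at hxy
      exact hxy.symm
    · have hy : y ≠ 0 := by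
        rintro rfl
        exact hx (pow_eq_zero_iff hn0 |>.mp (hxy.trans (zero_pow hn0)))
      lift x to G₀ˣ using hx.isUnit
      lift y to G₀ˣ using hy.isUnit
      exact congrArg Units.val (hunits.injective (Units.ext (by simpa using hxy)))
  · intro y
    rcases eq_or_ne y 0 with rfl | hy
    · exact ⟨0, zero_pow hn0⟩
    · lift y to G₀ˣ using hy.isUnit
      obtain ⟨x, rfl⟩ := hunits.surjective y
      exact ⟨x, by simp⟩

theorem stmt_13_general (e : ℕ) (he : Odd e)
    (F : Type) [Field F] [Fintype F] (hF : Fintype.card F = 2 ^ e) :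
    Function.Bijective (fun x : F => x ^ (2 ^ ((e + 1) / 2) + 2)) := by
  obtain ⟨k, rfl⟩ := he
  have hhalf : (2 * k + 1 + 1) / 2 = k + 1 := by omega
  rw [hhalf]
  refine pow_bijective_of_coprime_card_units (by positivity) ?_
  rw [Nat.card_units, Nat.card_eq_fintype_card, hF]
  exact (Nat.coprime_two_pow_succ_add_two_two_pow_odd_sub_one k).symm

/-- For `e` odd, the power map `x ↦ x^{2^{(e+1)/2} + 2}` is a bijection of the
field with `2^e` elements. -/
theorem stmt_13 (e : ℕ) (he : Odd e) (he0 : 0 < e)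
    (F : Type) [Field F] [Fintype F] (hF : Fintype.card F = 2 ^ e) :
    Function.Bijective (fun x : F => x ^ (2 ^ ((e + 1) / 2) + 2)) :=
  stmt_13_general e he F hF
end

section
/- Let F be a finite field of order q = 2^e with e odd, e ≥ 3, and let s = 2^{(e+1)/2}. Then the set {(x0, x1, x2, x3, x4, x6) ∈ F⁶ : x0^{s+1}·x6 = x1^{s+2} + x0^s·x1x2 + x0²·x2^s + x3^{s+2} + x0^s·x3x4 + x0²·x4^s} has exactly q⁵ elements. -/
/-!
Split the solutions `(x0, x1, x2, x3, x4, x6) = (v 0, …, v 5)` according to `x0`. If `x0 ≠ 0`,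
the equation determines `x6` from `(x0, …, x4)`. If `x0 = 0`, it reduces to
`x1 ^ (s + 2) + x3 ^ (s + 2) = 0`, i.e. to `x1 ^ (s + 2) = x3 ^ (s + 2)` in characteristic two,
and `x ↦ x ^ (s + 2)` is injective on `F` because `q - 1 ≡ 1 [MOD s + 2]`; so `x3 = x1`.
Dropping `x6` in the first case and `x3` in the second matches the solutions bijectively with `F⁵`.
-/

open Function

theorem Nat.coprime_two_pow_add_two_two_pow_sub_one (m : ℕ) :
    (2 ^ (m + 1) + 2).Coprime (2 ^ (2 * m + 1) - 1) := by
  have h : 2 ^ (2 * m + 1) - 1 = 1 + (2 ^ m - 1) * (2 ^ (m + 1) + 2) := by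
    zify [Nat.one_le_two_pow (n := m), Nat.one_le_two_pow (n := 2 * m + 1)]
    ring
  rw [h, Nat.coprime_add_mul_right_right]
  exact Nat.coprime_one_right _

theorem FiniteField.pow_injective_of_coprime {K : Type*} [Field K] [Fintype K] {n : ℕ}
    (hn : n ≠ 0) (h : n.Coprime (Fintype.card K - 1)) : Injective (· ^ n : K → K) := by
  intro x y hxy
  simp only at hxy
  rcases eq_or_ne x 0 with rfl | hx
  · rw [zero_pow hn, eq_comm, pow_eq_zero_iff hn] at hxy
    exact hxy.symm
  have hy : y ≠ 0 := by
    rintro rfl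
    exact hx (pow_eq_zero_iff hn |>.1 (hxy.trans (zero_pow hn)))
  have hn1 : (x / y) ^ n = 1 := by rw [div_pow, hxy, div_self (pow_ne_zero n hy)]
  have hq1 : (x / y) ^ (Fintype.card K - 1) = 1 :=
    FiniteField.pow_card_sub_one_eq_one _ (div_ne_zero hx hy)
  have h1 := pow_gcd_eq_one.2 ⟨hn1, hq1⟩
  rwa [h.gcd_eq_one, pow_one, div_eq_one_iff_eq hy] at h1

theorem card_setOf_graph_or_diagonal {α : Type*} [Zero α] (g : (Fin 5 → α) → α) :
    Nat.card {v : Fin 6 → α | (v 0 ≠ 0 ∧ v 5 = g (Fin.init v)) ∨ (v 0 = 0 ∧ v 3 = v 1)} =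
      Nat.card α ^ 5 := by
  classical
  let e : {v : Fin 6 → α | (v 0 ≠ 0 ∧ v 5 = g (Fin.init v)) ∨ (v 0 = 0 ∧ v 3 = v 1)} ≃
      (Fin 5 → α) :=
    { toFun := fun v => if v.1 0 = 0 then ![0, v.1 1, v.1 2, v.1 4, v.1 5] else Fin.init v.1
      invFun := fun w => ⟨if w 0 = 0 then ![0, w 1, w 2, w 1, w 3, w 4] else Fin.snoc w (g w), by
        split_ifs with hw
        · simp
        · refine Or.inl ⟨by simpa using hw, ?_⟩
          rw [Fin.init_snoc]
          exact Fin.snoc_last (α := fun _ => α) _ _⟩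
      left_inv := by
        rintro ⟨v, hv | hv⟩
        · simp only [hv.1, if_false, Subtype.mk.injEq]
          rw [if_neg (show Fin.init v 0 ≠ 0 from hv.1), ← hv.2]
          exact Fin.snoc_init_self v
        · simp only [hv.1, if_true, Subtype.mk.injEq]
          ext i
          fin_cases i <;> simp [hv]
      right_inv := by
        intro w
        by_cases hw : w 0 = 0
        · ext i
          fin_cases i <;> simp [hw]
        · simp [hw] }
  rw [Nat.card_congr e, Nat.card_fun, Nat.card_fin]

section BarlottiCofman

variable {F : Type*} [Field F]

theorem mul_eq_iff_eq_div_or_eq_zero (a b t : F) :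
    a * t = b ↔ (a ≠ 0 ∧ t = b / a) ∨ (a = 0 ∧ b = 0) := by
  rcases eq_or_ne a 0 with rfl | ha
  · simp [eq_comm]
  · simp [ha, eq_div_iff ha, mul_comm]

def bcForm (s : ℕ) (x : Fin 5 → F) : F :=
  x 1 ^ (s + 2) + x 0 ^ s * x 1 * x 2 + x 0 ^ 2 * x 2 ^ s
    + x 3 ^ (s + 2) + x 0 ^ s * x 3 * x 4 + x 0 ^ 2 * x 4 ^ s

variable [CharP F 2] {s : ℕ}

theorem bcForm_eq_zero_iff (hs : s ≠ 0) (hinj : Injective (· ^ (s + 2) : F → F))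
    {x : Fin 5 → F} (hx : x 0 = 0) : bcForm s x = 0 ↔ x 3 = x 1 := by
  simp only [bcForm, hx, zero_pow hs, zero_pow two_ne_zero, zero_mul, add_zero]
  rw [CharTwo.add_eq_zero, hinj.eq_iff, eq_comm]

theorem mul_eq_bcForm_iff (hs : s ≠ 0) (hinj : Injective (· ^ (s + 2) : F → F))
    (v : Fin 6 → F) :
    v 0 ^ (s + 1) * v 5 = bcForm s (Fin.init v) ↔
      (v 0 ≠ 0 ∧ v 5 = bcForm s (Fin.init v) / v 0 ^ (s + 1)) ∨ (v 0 = 0 ∧ v 3 = v 1) := by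
  rw [mul_eq_iff_eq_div_or_eq_zero, pow_ne_zero_iff s.succ_ne_zero,
    pow_eq_zero_iff s.succ_ne_zero]
  exact or_congr_right (and_congr_right fun h0 => bcForm_eq_zero_iff hs hinj h0)

end BarlottiCofman

theorem stmt_15_general (e : ℕ) (he : Odd e)
    (s : ℕ) (hs : s = 2 ^ ((e + 1) / 2))
    (F : Type) [Field F] [Fintype F] (hF : Fintype.card F = 2 ^ e) :
    Nat.card {v : Fin 6 → F |
        (v 0) ^ (s + 1) * v 5
          = (v 1) ^ (s + 2) + (v 0) ^ s * (v 1) * (v 2) + (v 0) ^ 2 * (v 2) ^ s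
            + (v 3) ^ (s + 2) + (v 0) ^ s * (v 3) * (v 4) + (v 0) ^ 2 * (v 4) ^ s}
      = Fintype.card F ^ 5 := by
  obtain ⟨m, rfl⟩ := he
  have hs' : s = 2 ^ (m + 1) := by rw [hs]; congr 1; omega
  have : Fact (Nat.Prime 2) := ⟨Nat.prime_two⟩
  have : CharP F 2 := charP_of_card_eq_prime_pow hF
  have hinj : Injective (· ^ (s + 2) : F → F) :=
    FiniteField.pow_injective_of_coprime (by omega)
      (by rw [hF, hs']; exact Nat.coprime_two_pow_add_two_two_pow_sub_one m)
  have hs0 : s ≠ 0 := by rw [hs']; positivity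
  rw [← Nat.card_eq_fintype_card,
    ← card_setOf_graph_or_diagonal fun x => bcForm s x / x 0 ^ (s + 1)]
  exact Nat.card_congr (Equiv.setCongr (Set.ext fun v => mul_eq_bcForm_iff hs0 hinj v))

/-- The homogeneous BC hypersurface of the BT variety restricted to `x5 = 0`
has exactly `q⁵` vector solutions. The coordinates are
`(x0, x1, x2, x3, x4, x6) = (v 0, v 1, v 2, v 3, v 4, v 5)`. -/
theorem stmt_15 (e : ℕ) (he : Odd e) (he3 : 3 ≤ e)
    (s : ℕ) (hs : s = 2 ^ ((e + 1) / 2))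
    (F : Type) [Field F] [Fintype F] (hF : Fintype.card F = 2 ^ e) :
    Nat.card {v : Fin 6 → F |
        (v 0) ^ (s + 1) * v 5
          = (v 1) ^ (s + 2) + (v 0) ^ s * (v 1) * (v 2) + (v 0) ^ 2 * (v 2) ^ s
            + (v 3) ^ (s + 2) + (v 0) ^ s * (v 3) * (v 4) + (v 0) ^ 2 * (v 4) ^ s}
      = Fintype.card F ^ 5 :=
  stmt_15_general e he s hs F hF
end

section
/- Let F be a finite field of order q = 2^e with e odd, e ≥ 3, let s = 2^{(e+1)/2}, and let δ ∈ F with δ ≠ 0. For all k0, k1 ∈ F, one has ((k0·X + δ·k1)^{s+2} = X^{s+2} for every X ∈ F) if and only if k0 = 1 and k1 = 0. -/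
/-!
Putting `X = 0` forces `k1 = 0`, and then `X = 1` gives `k0 ^ (s + 2) = 1`. Write `e = 2a + 1`
and `m = 2 ^ a`, so that `s + 2 = 2 (m + 1)` and `q = 2 m²`. Squaring is injective in
characteristic 2, so `k0 ^ (m + 1) = 1`. Since `m + 1` divides `m (m + 1)`, cancelling `k0 ^ m`
gives `k0 ^ (m²) = k0`; squaring and using `k0 ^ q = k0` then yields `k0 ^ 2 = k0`, i.e. `k0 = 1`.
-/

theorem FiniteField.eq_one_of_pow_succ_eq_one {F : Type*} [Field F] [Fintype F] {m : ℕ}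
    (hF : Fintype.card F = 2 * m ^ 2) {k : F} (hk : k ^ (m + 1) = 1) : k = 1 := by
  have hk0 : k ≠ 0 := by
    rintro rfl
    simp at hk
  have hmm : k ^ (m * m) = k := by
    refine mul_right_cancel₀ (pow_ne_zero m hk0) ?_
    calc k ^ (m * m) * k ^ m = (k ^ (m + 1)) ^ m := by ring
      _ = k * k ^ m := by rw [hk, one_pow, ← pow_succ', hk]
  have hsq : k * k = k * 1 :=
    calc k * k = (k ^ (m * m)) ^ 2 := by rw [hmm, sq]
      _ = k ^ Fintype.card F := by rw [hF]; ring
      _ = k * 1 := by rw [FiniteField.pow_card, mul_one]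
  exact mul_left_cancel₀ hk0 hsq

theorem stmt_16_general (e : ℕ) (he : Odd e)
    (s : ℕ) (hs : s = 2 ^ ((e + 1) / 2))
    (F : Type) [Field F] [Fintype F] (hF : Fintype.card F = 2 ^ e)
    (δ : F) (hδ : δ ≠ 0) (k0 k1 : F) :
    (∀ X : F, (k0 * X + δ * k1) ^ (s + 2) = X ^ (s + 2))
    ↔ k0 = 1 ∧ k1 = 0 := by
  constructor
  · intro h
    have : CharP F 2 := charP_of_card_eq_prime_pow hF
    have hk1 : k1 = 0 := by simpa [hδ] using h 0
    subst hk1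
    obtain ⟨a, rfl⟩ := he
    have hs2 : s + 2 = 2 * (2 ^ a + 1) := by
      rw [hs, show (2 * a + 1 + 1) / 2 = a + 1 by omega, pow_succ]
      ring
    have hq : Fintype.card F = 2 * (2 ^ a) ^ 2 := by
      rw [hF]
      ring
    have hk0 : (k0 ^ (2 ^ a + 1)) ^ 2 = 1 ^ 2 := by
      simpa [hs2, ← pow_mul, mul_comm] using h 1
    exact ⟨FiniteField.eq_one_of_pow_succ_eq_one hq (CharTwo.sq_injective hk0), rfl⟩
  · rintro ⟨rfl, rfl⟩ X
    simp

/-- Algebraic core of the determination of the spread lines contained in the BC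
hypersurface of the BT variety: `(k0·X + δ·k1)^{s+2} = X^{s+2}` identically in
`X` iff `k0 = 1` and `k1 = 0`. -/
theorem stmt_16 (e : ℕ) (he : Odd e) (he3 : 3 ≤ e)
    (s : ℕ) (hs : s = 2 ^ ((e + 1) / 2))
    (F : Type) [Field F] [Fintype F] (hF : Fintype.card F = 2 ^ e)
    (δ : F) (hδ : δ ≠ 0) (k0 k1 : F) :
    (∀ X : F, (k0 * X + δ * k1) ^ (s + 2) = X ^ (s + 2))
    ↔ k0 = 1 ∧ k1 = 0 :=
  stmt_16_general e he s hs F hF δ hδ k0 k1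
end
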